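/- If q is a controlled Lagrangian trajectory for potential V with the potential-energy-shaping control u(t) = β(q(t)), then the desired total energy E_d(t) = (1/2) q̇(t)ᵀ M(q(t)) q̇(t) + V_d(q(t)) is constant: E_d(t₁) = E_d(t₂) for all t₁, t₂ ∈ ℝ. -/

import Mathlib

/-!
The shaping control is chosen so that `g(q) β(q) = ∇V(q) - ∇V_d(q)`, which turns the controlled
equation of motion for `V` into the uncontrolled one `M q̈ = -(1/2) Ṁ q̇ - ∇V_d(q)` for `V_d`.
Along any solution of the latter, the derivative of `(1/2) q̇ᵀ M q̇ + V_d(q)` is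
`q̇ᵀ M q̈ + (1/2) q̇ᵀ Ṁ q̇ + ∇V_dᵀ q̇ = 0`, using the symmetry of `M`.
-/

open Matrix

theorem Matrix.mulVec_mulVec_nonsing_inv_mulVec {m n R : Type*} [Fintype m] [Fintype n]
    [DecidableEq m] [CommRing R] {A : Matrix m n R} {B : Matrix n m R} (hAB : IsUnit (A * B))
    (v : m → R) : A *ᵥ (B *ᵥ ((A * B)⁻¹ *ᵥ v)) = v := by
  rw [mulVec_mulVec, mulVec_mulVec,
    mul_nonsing_inv _ ((isUnit_iff_isUnit_det _).mp hAB), one_mulVec]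

theorem Matrix.IsSymm.dotProduct_mulVec_comm {n R : Type*} [Fintype n] [CommSemiring R]
    {A : Matrix n n R} (hA : A.IsSymm) (v w : n → R) : v ⬝ᵥ A *ᵥ w = w ⬝ᵥ A *ᵥ v := by
  rw [dotProduct_mulVec, ← mulVec_transpose, hA.eq, dotProduct_comm]

section Calculus

variable {ι : Type*} [Fintype ι] {x y : ℝ → ι → ℝ} {x' y' : ι → ℝ} {t : ℝ}

theorem HasDerivAt.dotProduct (hx : HasDerivAt x x' t) (hy : HasDerivAt y y' t) :
    HasDerivAt (fun s => x s ⬝ᵥ y s) (x' ⬝ᵥ y t + x t ⬝ᵥ y') t := by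
  unfold _root_.dotProduct
  rw [← Finset.sum_add_distrib]
  exact HasDerivAt.fun_sum fun i _ => (hasDerivAt_pi.mp hx i).fun_mul (hasDerivAt_pi.mp hy i)

theorem HasDerivAt.mulVec {A : ℝ → Matrix ι ι ℝ} {A' : Matrix ι ι ℝ}
    (hA : ∀ i j, HasDerivAt (fun s => A s i j) (A' i j) t) (hy : HasDerivAt y y' t) :
    HasDerivAt (fun s => A s *ᵥ y s) (A' *ᵥ y t + A t *ᵥ y') t :=
  hasDerivAt_pi.mpr fun i => (hasDerivAt_pi.mpr (hA i)).dotProduct hy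

theorem sum_smul_proj_apply (w v : ι → ℝ) :
    (∑ i, w i • (ContinuousLinearMap.proj i : (ι → ℝ) →L[ℝ] ℝ)) v = w ⬝ᵥ v := by
  simp [dotProduct]

theorem HasFDerivAt.comp_hasDerivAt_of_gradient {W : (ι → ℝ) → ℝ} {w : ι → ℝ}
    (hW : HasFDerivAt W (∑ i, w i • (ContinuousLinearMap.proj i : (ι → ℝ) →L[ℝ] ℝ)) (x t))
    (hx : HasDerivAt x x' t) :
    HasDerivAt (fun s => W (x s)) (w ⬝ᵥ x') t :=
  sum_smul_proj_apply w x' ▸ hW.comp_hasDerivAt t hx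

end Calculus

section Energy

variable {ι : Type*} [Fintype ι] {q qd qdd : ℝ → ι → ℝ} {M : (ι → ℝ) → Matrix ι ι ℝ}
  {Md : ℝ → Matrix ι ι ℝ} {W : (ι → ℝ) → ℝ} {gradW : (ι → ℝ) → ι → ℝ}

theorem hasDerivAt_lagrangianEnergy_eq_zero (hq : ∀ t, HasDerivAt q (qd t) t)
    (hqd : ∀ t, HasDerivAt qd (qdd t) t) (hMsymm : ∀ x, (M x).IsSymm)
    (hM : ∀ i j t, HasDerivAt (fun s => M (q s) i j) (Md t i j) t)
    (hW : ∀ x, HasFDerivAt W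
      (∑ i, gradW x i • (ContinuousLinearMap.proj i : (ι → ℝ) →L[ℝ] ℝ)) x)
    (hmotion : ∀ t, M (q t) *ᵥ qdd t = -((1 : ℝ) / 2) • Md t *ᵥ qd t - gradW (q t)) (t : ℝ) :
    HasDerivAt (fun s => (1 / 2 : ℝ) * (qd s ⬝ᵥ M (q s) *ᵥ qd s) + W (q s)) 0 t := by
  have hkinetic := (hqd t).dotProduct (HasDerivAt.mulVec (hM · · t) (hqd t))
  refine ((hkinetic.const_mul (1 / 2)).add
    ((hW (q t)).comp_hasDerivAt_of_gradient (hq t))).congr_deriv ?_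
  rw [(hMsymm (q t)).dotProduct_mulVec_comm (qdd t), dotProduct_add, hmotion, dotProduct_sub,
    dotProduct_smul, dotProduct_comm (gradW (q t)), smul_eq_mul]
  ring

theorem lagrangianEnergy_eq (hq : ∀ t, HasDerivAt q (qd t) t)
    (hqd : ∀ t, HasDerivAt qd (qdd t) t) (hMsymm : ∀ x, (M x).IsSymm)
    (hM : ∀ i j t, HasDerivAt (fun s => M (q s) i j) (Md t i j) t)
    (hW : ∀ x, HasFDerivAt W
      (∑ i, gradW x i • (ContinuousLinearMap.proj i : (ι → ℝ) →L[ℝ] ℝ)) x)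
    (hmotion : ∀ t, M (q t) *ᵥ qdd t = -((1 : ℝ) / 2) • Md t *ᵥ qd t - gradW (q t))
    (t₁ t₂ : ℝ) :
    (1 / 2 : ℝ) * (qd t₁ ⬝ᵥ M (q t₁) *ᵥ qd t₁) + W (q t₁) =
      (1 / 2 : ℝ) * (qd t₂ ⬝ᵥ M (q t₂) *ᵥ qd t₂) + W (q t₂) :=
  have hE := hasDerivAt_lagrangianEnergy_eq_zero hq hqd hMsymm hM hW hmotion
  is_const_of_deriv_eq_zero (fun t => (hE t).differentiableAt) (fun t => (hE t).deriv) t₁ t₂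

end Energy

theorem desired_energy_conserved_under_potential_energy_shaping_general
    (m k : ℕ)
    -- the curve, its velocity and acceleration
    (q qd qdd : ℝ → (Fin m → ℝ))
    (hq : ∀ t, HasDerivAt q (qd t) t)
    (hqd : ∀ t, HasDerivAt qd (qdd t) t)
    -- the mass matrix, symmetric, with `t ↦ M (q t)` differentiable with derivative `Md`
    (M : (Fin m → ℝ) → Matrix (Fin m) (Fin m) ℝ)
    (hMsymm : ∀ x, (M x).IsSymm)
    (Md : ℝ → Matrix (Fin m) (Fin m) ℝ)
    (hM : ∀ i j t, HasDerivAt (fun s => M (q s) i j) (Md t i j) t)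
    -- the potential energy, differentiable with gradient `gradV`
    (gradV : (Fin m → ℝ) → (Fin m → ℝ))
    -- the desired potential energy, differentiable with gradient `gradVd`
    (Vd : (Fin m → ℝ) → ℝ)
    (gradVd : (Fin m → ℝ) → (Fin m → ℝ))
    (hVd : ∀ x, HasFDerivAt Vd
      (∑ i, gradVd x i • (ContinuousLinearMap.proj i : (Fin m → ℝ) →L[ℝ] ℝ)) x)
    -- the input matrix, fully actuated: `g(x) g(x)ᵀ` is invertible for every `x`
    (g : (Fin m → ℝ) → Matrix (Fin m) (Fin k) ℝ)
    (hg : ∀ x, IsUnit (g x * (g x)ᵀ))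
    -- the potential-energy-shaping control
    (β : (Fin m → ℝ) → (Fin k → ℝ))
    (hβ : ∀ x, β x = ((g x)ᵀ).mulVec (((g x * (g x)ᵀ)⁻¹).mulVec (gradV x - gradVd x)))
    -- `q` is a controlled Lagrangian trajectory for `V` with control `u(t) = β(q(t))`
    (u : ℝ → (Fin k → ℝ))
    (hu : ∀ t, u t = β (q t))
    (htraj : ∀ t, (M (q t)).mulVec (qdd t) =
      -((1 : ℝ) / 2) • (Md t).mulVec (qd t) - gradV (q t) + (g (q t)).mulVec (u t))
    -- the desired total energy
    (Ed : ℝ → ℝ)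
    (hEd : ∀ t, Ed t = (1 / 2 : ℝ) * (qd t ⬝ᵥ (M (q t)).mulVec (qd t)) + Vd (q t)) :
    ∀ t₁ t₂ : ℝ, Ed t₁ = Ed t₂ := by
  have hclosedLoop : ∀ t, M (q t) *ᵥ qdd t = -((1 : ℝ) / 2) • Md t *ᵥ qd t - gradVd (q t) := by
    intro t
    rw [htraj, hu, hβ, mulVec_mulVec_nonsing_inv_mulVec (hg (q t))]
    abel
  intro t₁ t₂
  rw [hEd, hEd]
  exact lagrangianEnergy_eq hq hqd hMsymm hM hVd hclosedLoop t₁ t₂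

/-- If `q` is a controlled Lagrangian trajectory for potential `V` with the
potential-energy-shaping control `u(t) = β(q(t))`, then the desired total energy
`E_d(t) = (1/2) q̇(t)ᵀ M(q(t)) q̇(t) + V_d(q(t))` is constant. -/
theorem desired_energy_conserved_under_potential_energy_shaping
    (m k : ℕ) (hm : 1 ≤ m) (hk : 1 ≤ k)
    -- the curve, its velocity and acceleration
    (q qd qdd : ℝ → (Fin m → ℝ))
    (hq : ∀ t, HasDerivAt q (qd t) t)
    (hqd : ∀ t, HasDerivAt qd (qdd t) t)
    -- the mass matrix, symmetric, with `t ↦ M (q t)` differentiable with derivative `Md`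
    (M : (Fin m → ℝ) → Matrix (Fin m) (Fin m) ℝ)
    (hMsymm : ∀ x, (M x).IsSymm)
    (Md : ℝ → Matrix (Fin m) (Fin m) ℝ)
    (hM : ∀ i j t, HasDerivAt (fun s => M (q s) i j) (Md t i j) t)
    -- the potential energy, differentiable with gradient `gradV`
    (V : (Fin m → ℝ) → ℝ)
    (gradV : (Fin m → ℝ) → (Fin m → ℝ))
    (hV : ∀ x, HasFDerivAt V
      (∑ i, gradV x i • (ContinuousLinearMap.proj i : (Fin m → ℝ) →L[ℝ] ℝ)) x)
    -- the desired potential energy, differentiable with gradient `gradVd`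
    (Vd : (Fin m → ℝ) → ℝ)
    (gradVd : (Fin m → ℝ) → (Fin m → ℝ))
    (hVd : ∀ x, HasFDerivAt Vd
      (∑ i, gradVd x i • (ContinuousLinearMap.proj i : (Fin m → ℝ) →L[ℝ] ℝ)) x)
    -- the input matrix, fully actuated: `g(x) g(x)ᵀ` is invertible for every `x`
    (g : (Fin m → ℝ) → Matrix (Fin m) (Fin k) ℝ)
    (hg : ∀ x, IsUnit (g x * (g x)ᵀ))
    -- the potential-energy-shaping control
    (β : (Fin m → ℝ) → (Fin k → ℝ))
    (hβ : ∀ x, β x = ((g x)ᵀ).mulVec (((g x * (g x)ᵀ)⁻¹).mulVec (gradV x - gradVd x)))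
    -- `q` is a controlled Lagrangian trajectory for `V` with control `u(t) = β(q(t))`
    (u : ℝ → (Fin k → ℝ))
    (hu : ∀ t, u t = β (q t))
    (htraj : ∀ t, (M (q t)).mulVec (qdd t) =
      -((1 : ℝ) / 2) • (Md t).mulVec (qd t) - gradV (q t) + (g (q t)).mulVec (u t))
    -- the desired total energy
    (Ed : ℝ → ℝ)
    (hEd : ∀ t, Ed t = (1 / 2 : ℝ) * (qd t ⬝ᵥ (M (q t)).mulVec (qd t)) + Vd (q t)) :
    ∀ t₁ t₂ : ℝ, Ed t₁ = Ed t₂ :=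
  desired_energy_conserved_under_potential_energy_shaping_general m k q qd qdd hq hqd M hMsymm Md hM
    gradV Vd gradVd hVd g hg β hβ u hu htraj Ed hEd
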